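/- Set x' := (1/2)(x ⊗ x + x ⊗ x³ + x³ ⊗ x − x³ ⊗ x³) and y' := y ⊗ y in the twisted tensor product algebra A ⊗̂ A. Then x'⁴ = 1 ⊗ 1, x'y' = y'x'³, and y'² = (1/2)(ζ(1 ⊗ 1) + x' − ζx'² + x'³). Consequently there is a unique K-algebra homomorphism Δ : A → A ⊗̂ A with Δ(x) = x' and Δ(y) = y'. -/

import Mathlib

/-!
Writing `L_g = id ⊗ ρ g` and `R_g = ρ g ⊗ id`, the twisted product is
`z ⋆ w = ¼ ∑_{g,g'} θ(g,g') L_{g'} z · R_g w` in the ordinary tensor product algebra.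
Associativity then only uses that `θ` is a bicharacter (reindex the fourfold sum), and `1 ⊗ 1`
is a unit because the rows and columns of `θ` are nontrivial characters away from `g = 1`.
Hence `A ⊗̂ A` is an algebra, and `Δ` exists and is unique by the presentation of `A`.

For the relations: the action of `g₃` fixes `x`, and when the inner factors `b, c` of
`(a ⊗ b)(c ⊗ d)` are `g₃`-fixed the twist cancels, so `x'` generates an untwisted copy of
`K[x] ⊗ K[x]`, where `x'² = x² ⊗ x²` and `x'⁴ = 1`. When only one inner factor is `g₃`-fixed,
half of the sixteen terms cancel (and `ζ²` drops out), which gives `x'y' = xy ⊗ xy = y'x'³`;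
`y'²` is a direct expansion, using `ζ⁴ = 1`.
-/

open TensorProduct

/-- The defining relations of the second example: `x⁴ = 1`, `xy = yx³`, and
`y² = (1/2)(ζ + x - ζx² + x³)`. -/
inductive SecondRel (K : Type*) [Field K] (ζ : K) :
    FreeAlgebra K (Fin 2) → FreeAlgebra K (Fin 2) → Prop
  | x_pow_four : SecondRel K ζ (FreeAlgebra.ι K 0 ^ 4) 1
  | x_mul_y : SecondRel K ζ (FreeAlgebra.ι K 0 * FreeAlgebra.ι K 1)
      (FreeAlgebra.ι K 1 * FreeAlgebra.ι K 0 ^ 3)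
  | y_sq : SecondRel K ζ (FreeAlgebra.ι K 1 ^ 2)
      ((2 : K)⁻¹ • (ζ • (1 : FreeAlgebra K (Fin 2)) + FreeAlgebra.ι K 0
        - ζ • (FreeAlgebra.ι K 0 ^ 2) + FreeAlgebra.ι K 0 ^ 3))

/-- The second example: the `K`-algebra generated by noncommuting elements `x`, `y`
subject to `x⁴ = 1`, `xy = yx³` and `y² = (1/2)(ζ + x - ζx² + x³)`. -/
abbrev SecondAlg (K : Type*) [Field K] (ζ : K) : Type _ := RingQuot (SecondRel K ζ)

/-- The generator `x` of the second example. -/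
noncomputable def xS (K : Type*) [Field K] (ζ : K) : SecondAlg K ζ :=
  RingQuot.mkAlgHom K (SecondRel K ζ) (FreeAlgebra.ι K 0)

/-- The generator `y` of the second example. -/
noncomputable def yS (K : Type*) [Field K] (ζ : K) : SecondAlg K ζ :=
  RingQuot.mkAlgHom K (SecondRel K ζ) (FreeAlgebra.ι K 1)

/-- The group `G = ℤ/2 × ℤ/2`, written multiplicatively. -/
abbrev GG : Type := Multiplicative (ZMod 2 × ZMod 2)

/-- `g₁ = (0,0)`. -/
def g1 : GG := Multiplicative.ofAdd (0, 0)
/-- `g₂ = (1,0)`. -/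
def g2 : GG := Multiplicative.ofAdd (1, 0)
/-- `g₃ = (0,1)`. -/
def g3 : GG := Multiplicative.ofAdd (0, 1)
/-- `g₄ = (1,1)`. -/
def g4 : GG := Multiplicative.ofAdd (1, 1)

/-- The twisted multiplication of `A ⊗̂ A`:
`(a ⊗ b)(a' ⊗ b') = (1/4) ∑_{g,g'} θ(g,g') (a (g.a')) ⊗ ((g'.b) b')`,
extended bilinearly. -/
noncomputable def twMul {K : Type*} [Field K] {B : Type*} [Ring B] [Algebra K B]
    {G : Type*} [Monoid G] [Fintype G]
    (ρ : G →* (B →ₐ[K] B)) (θ : G → G → K)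
    (z w : B ⊗[K] B) : B ⊗[K] B :=
  (4 : K)⁻¹ • ∑ g : G, ∑ g' : G, θ g g' •
    (TensorProduct.map (LinearMap.mul' K B) (LinearMap.mul' K B))
      ((TensorProduct.tensorTensorTensorComm K B B B B)
        ((TensorProduct.map
            (TensorProduct.map LinearMap.id (ρ g').toLinearMap)
            (TensorProduct.map (ρ g).toLinearMap LinearMap.id))
          (z ⊗ₜ[K] w)))

/-- A type synonym for `B ⊗[K] B`, so that the twisted ring structure does not clash with the
ordinary one. -/
def TwistedTensor (K B : Type*) [Field K] [Ring B] [Algebra K B] : Type _ := B ⊗[K] B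

namespace TwistedTensor

variable {K : Type*} [Field K] {B : Type*} [Ring B] [Algebra K B] {G : Type*}

section Action

open Algebra.TensorProduct

variable [Monoid G] (ρ : G →* (B →ₐ[K] B))

theorem map_one_id (z : B ⊗[K] B) : map (ρ 1) (AlgHom.id K B) z = z := by
  induction z using TensorProduct.induction_on <;> simp_all

theorem map_id_one (z : B ⊗[K] B) : map (AlgHom.id K B) (ρ 1) z = z := by
  induction z using TensorProduct.induction_on <;> simp_all

theorem map_id_map_id (g h : G) (z : B ⊗[K] B) :
    map (AlgHom.id K B) (ρ g) (map (AlgHom.id K B) (ρ h) z) =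
      map (AlgHom.id K B) (ρ (g * h)) z := by
  induction z using TensorProduct.induction_on <;> simp_all [map_mul]

theorem map_map_id (g h : G) (z : B ⊗[K] B) :
    map (ρ g) (AlgHom.id K B) (map (ρ h) (AlgHom.id K B) z) =
      map (ρ (g * h)) (AlgHom.id K B) z := by
  induction z using TensorProduct.induction_on <;> simp_all [map_mul]

theorem map_id_map_comm (g h : G) (z : B ⊗[K] B) :
    map (AlgHom.id K B) (ρ g) (map (ρ h) (AlgHom.id K B) z) =
      map (ρ h) (AlgHom.id K B) (map (AlgHom.id K B) (ρ g) z) := by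
  induction z using TensorProduct.induction_on <;> simp_all

end Action

section Monoid

open Algebra.TensorProduct

variable [Monoid G] [Fintype G] (ρ : G →* (B →ₐ[K] B)) (θ : G → G → K)

noncomputable def twMulₗ : (B ⊗[K] B) →ₗ[K] (B ⊗[K] B) →ₗ[K] B ⊗[K] B :=
  (4 : K)⁻¹ • ∑ g : G, ∑ g' : G, θ g g' •
    (LinearMap.mul K (B ⊗[K] B)).compl₁₂
      (map (AlgHom.id K B) (ρ g')).toLinearMap (map (ρ g) (AlgHom.id K B)).toLinearMap

theorem twMulₗ_apply (z w : B ⊗[K] B) :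
    twMulₗ ρ θ z w = (4 : K)⁻¹ • ∑ g : G, ∑ g' : G,
      θ g g' • (map (AlgHom.id K B) (ρ g') z * map (ρ g) (AlgHom.id K B) w) := by
  simp only [twMulₗ, LinearMap.smul_apply, LinearMap.sum_apply, LinearMap.compl₁₂_apply,
    LinearMap.mul_apply', AlgHom.toLinearMap_apply]

theorem twMul_tmul (a b c d : B) :
    twMul ρ θ (a ⊗ₜ b) (c ⊗ₜ d) =
      (4 : K)⁻¹ • ∑ g, ∑ g', θ g g' • ((a * ρ g c) ⊗ₜ[K] (ρ g' b * d)) := by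
  simp [twMul]

theorem twMul_eq_twMulₗ (z w : B ⊗[K] B) : twMul ρ θ z w = twMulₗ ρ θ z w := by
  induction z using TensorProduct.induction_on with
  | zero => simp [twMul]
  | add p q hp hq =>
    simp only [twMul, add_tmul, map_add, LinearMap.add_apply, smul_add,
      Finset.sum_add_distrib] at hp hq ⊢
    rw [hp, hq]
  | tmul a b =>
    induction w using TensorProduct.induction_on with
    | zero => simp [twMul]
    | add p q hp hq =>
      simp only [twMul, tmul_add, map_add, smul_add, Finset.sum_add_distrib] at hp hq ⊢
      rw [hp, hq]
    | tmul c d => simp [twMul, twMulₗ, LinearMap.sum_apply]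

theorem twMul_add_left (u v w : B ⊗[K] B) :
    twMul ρ θ (u + v) w = twMul ρ θ u w + twMul ρ θ v w := by
  simp only [twMul_eq_twMulₗ, map_add, LinearMap.add_apply]

theorem twMul_add_right (u v w : B ⊗[K] B) :
    twMul ρ θ u (v + w) = twMul ρ θ u v + twMul ρ θ u w := by
  simp only [twMul_eq_twMulₗ, map_add]

theorem twMul_sub_left (u v w : B ⊗[K] B) :
    twMul ρ θ (u - v) w = twMul ρ θ u w - twMul ρ θ v w := by
  simp only [twMul_eq_twMulₗ, map_sub, LinearMap.sub_apply]

theorem twMul_sub_right (u v w : B ⊗[K] B) :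
    twMul ρ θ u (v - w) = twMul ρ θ u v - twMul ρ θ u w := by
  simp only [twMul_eq_twMulₗ, map_sub]

theorem twMul_smul_left (c : K) (u w : B ⊗[K] B) :
    twMul ρ θ (c • u) w = c • twMul ρ θ u w := by
  simp only [twMul_eq_twMulₗ, map_smul, LinearMap.smul_apply]

theorem twMul_smul_right (c : K) (u w : B ⊗[K] B) :
    twMul ρ θ u (c • w) = c • twMul ρ θ u w := by
  simp only [twMul_eq_twMulₗ, map_smul]

theorem zero_twMul (w : B ⊗[K] B) : twMul ρ θ 0 w = 0 := by
  simp only [twMul_eq_twMulₗ, map_zero, LinearMap.zero_apply]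

theorem twMul_zero (w : B ⊗[K] B) : twMul ρ θ w 0 = 0 := by
  simp only [twMul_eq_twMulₗ, map_zero]

theorem one_twMul (h4 : (4 : K) ≠ 0) (hθ1 : ∑ h, θ 1 h = 4) (hθ : ∀ g ≠ 1, ∑ h, θ g h = 0)
    (z : B ⊗[K] B) : twMul ρ θ (1 ⊗ₜ 1) z = z := by
  rw [twMul_eq_twMulₗ, twMulₗ_apply, ← one_def]
  simp only [map_one, one_mul, ← Finset.sum_smul]
  rw [Finset.sum_eq_single 1 (fun g _ hg => by rw [hθ g hg, zero_smul]) (by simp), hθ1,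
    map_one_id, smul_smul, inv_mul_cancel₀ h4, one_smul]

theorem twMul_one (h4 : (4 : K) ≠ 0) (hθ1 : ∑ g, θ g 1 = 4) (hθ : ∀ h ≠ 1, ∑ g, θ g h = 0)
    (z : B ⊗[K] B) : twMul ρ θ z (1 ⊗ₜ 1) = z := by
  rw [twMul_eq_twMulₗ, twMulₗ_apply, ← one_def, Finset.sum_comm]
  simp only [map_one, mul_one, ← Finset.sum_smul]
  rw [Finset.sum_eq_single 1 (fun g _ hg => by rw [hθ g hg, zero_smul]) (by simp), hθ1,
    map_id_one, smul_smul, inv_mul_cancel₀ h4, one_smul]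

end Monoid

theorem sum_sum_sum_sum_eq_sum_prod [Fintype G] {M : Type*} [AddCommMonoid M]
    (F : G → G → G → G → M) :
    ∑ a, ∑ b, ∑ c, ∑ d, F a b c d = ∑ p : G × G × G × G, F p.1 p.2.1 p.2.2.1 p.2.2.2 := by
  simp only [Fintype.sum_prod_type]

section Group

variable [Group G] (ρ : G →* (B →ₐ[K] B)) (θ : G → G → K)

/-- The substitution `(g, g', h, h') ↦ (g⁻¹h, h', g, h'g')` turning the expansion of
`(u ⋆ v) ⋆ w` into that of `u ⋆ (v ⋆ w)`. -/
def assocEquiv : G × G × G × G ≃ G × G × G × G where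
  toFun p := (p.1⁻¹ * p.2.2.1, p.2.2.2, p.1, p.2.2.2 * p.2.1)
  invFun p := (p.2.2.1, p.2.1⁻¹ * p.2.2.2, p.2.2.1 * p.1, p.2.1)
  left_inv p := by simp
  right_inv p := by simp

theorem twMul_assoc [Fintype G] (hθl : ∀ g g' h : G, θ (g * g') h = θ g h * θ g' h)
    (hθr : ∀ g h h' : G, θ g (h * h') = θ g h * θ g h') (u v w : B ⊗[K] B) :
    twMul ρ θ (twMul ρ θ u v) w = twMul ρ θ u (twMul ρ θ v w) := by
  simp only [twMul_eq_twMulₗ, twMulₗ_apply, map_smul, map_sum, LinearMap.smul_apply,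
    LinearMap.sum_apply, Finset.smul_sum, smul_smul]
  simp only [map_mul (Algebra.TensorProduct.map _ _), map_id_map_id, map_map_id,
    map_id_map_comm, mul_assoc, sum_sum_sum_sum_eq_sum_prod]
  refine Fintype.sum_equiv assocEquiv _ _ fun ⟨g, g', h, h'⟩ => ?_
  have hθ : θ h h' = θ g h' * θ (g⁻¹ * h) h' := by rw [← hθl, mul_inv_cancel_left]
  simp only [assocEquiv, Equiv.coe_fn_mk, mul_inv_cancel_left, hθr g h' g', hθ]
  congr 1
  ring

end Group

noncomputable instance : AddCommGroup (TwistedTensor K B) :=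
  inferInstanceAs (AddCommGroup (B ⊗[K] B))

noncomputable instance : Module K (TwistedTensor K B) := inferInstanceAs (Module K (B ⊗[K] B))

variable [Monoid G] [Fintype G] (ρ : G →* (B →ₐ[K] B)) (θ : G → G → K)
  (hassoc : ∀ u v w, twMul ρ θ (twMul ρ θ u v) w = twMul ρ θ u (twMul ρ θ v w))
  (hone_mul : ∀ z : B ⊗[K] B, twMul ρ θ (1 ⊗ₜ 1) z = z)
  (hmul_one : ∀ z : B ⊗[K] B, twMul ρ θ z (1 ⊗ₜ 1) = z)

noncomputable abbrev ring : Ring (TwistedTensor K B) where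
  mul := twMul ρ θ
  one := (1 : B ⊗[K] B)
  left_distrib := twMul_add_right ρ θ
  right_distrib := twMul_add_left ρ θ
  zero_mul := zero_twMul ρ θ
  mul_zero := twMul_zero ρ θ
  mul_assoc := hassoc
  one_mul := hone_mul
  mul_one := hmul_one

noncomputable abbrev algebra :
    letI := ring ρ θ hassoc hone_mul hmul_one
    Algebra K (TwistedTensor K B) :=
  letI := ring ρ θ hassoc hone_mul hmul_one
  Algebra.ofModule (twMul_smul_left ρ θ) (twMul_smul_right ρ θ)

end TwistedTensor

theorem GG_cases (g : GG) : g = 1 ∨ g = g2 ∨ g = g3 ∨ g = g2 * g3 := by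
  revert g
  decide

theorem sum_GG {M : Type*} [AddCommMonoid M] (f : GG → M) :
    ∑ g, f g = f 1 + f g2 + f g3 + f (g2 * g3) := by
  rw [show (Finset.univ : Finset GG) = {1, g2, g3, g2 * g3} by decide,
    Finset.sum_insert (by decide), Finset.sum_insert (by decide),
    Finset.sum_insert (by decide), Finset.sum_singleton, ← add_assoc, ← add_assoc]

structure IsSecondBichar {K : Type*} [Field K] (ζ : K) (θ : GG → GG → K) : Prop where
  mul_right : ∀ g h h' : GG, θ g (h * h') = θ g h * θ g h'
  mul_left : ∀ g g' h : GG, θ (g * g') h = θ g h * θ g' h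
  g2_g2 : θ g2 g2 = ζ ^ 2
  g2_g3 : θ g2 g3 = -1
  g3_g2 : θ g3 g2 = -1
  g3_g3 : θ g3 g3 = 1

namespace IsSecondBichar

open TwistedTensor

variable {K : Type*} [Field K] {ζ : K} {θ : GG → GG → K} (hθ : IsSecondBichar ζ θ)
include hθ

theorem apply_one_right (g : GG) : θ g 1 = 1 := by
  rcases GG_cases g with rfl | rfl | rfl | rfl <;>
    simp only [show (1 : GG) = g3 * g3 by decide, hθ.mul_right, hθ.mul_left, hθ.g2_g3,
      hθ.g3_g3] <;> norm_num

theorem apply_one_left (h : GG) : θ 1 h = 1 := by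
  rcases GG_cases h with rfl | rfl | rfl | rfl <;>
    simp only [show (1 : GG) = g3 * g3 by decide, hθ.mul_right, hθ.mul_left, hθ.g3_g2,
      hθ.g3_g3] <;> norm_num

theorem sum_row_eq_zero {g : GG} (hg : g ≠ 1) : ∑ h, θ g h = 0 := by
  rw [sum_GG]
  rcases GG_cases g with rfl | rfl | rfl | rfl
  · exact absurd rfl hg
  all_goals simp only [hθ.mul_right, hθ.mul_left, hθ.apply_one_right, hθ.g2_g2, hθ.g2_g3,
    hθ.g3_g2, hθ.g3_g3]; ring

theorem sum_column_eq_zero {h : GG} (hh : h ≠ 1) : ∑ g, θ g h = 0 := by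
  rw [sum_GG]
  rcases GG_cases h with rfl | rfl | rfl | rfl
  · exact absurd rfl hh
  all_goals simp only [hθ.mul_right, hθ.mul_left, hθ.apply_one_left, hθ.g2_g2, hθ.g2_g3,
    hθ.g3_g2, hθ.g3_g3]; ring

variable {B : Type*} [Ring B] [Algebra K B] (ρ : GG →* (B →ₐ[K] B))

theorem one_twMul (h4 : (4 : K) ≠ 0) (z : B ⊗[K] B) : twMul ρ θ (1 ⊗ₜ 1) z = z :=
  TwistedTensor.one_twMul ρ θ h4 (by simp [hθ.apply_one_left])
    (fun _ hg => hθ.sum_row_eq_zero hg) z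

theorem twMul_one (h4 : (4 : K) ≠ 0) (z : B ⊗[K] B) : twMul ρ θ z (1 ⊗ₜ 1) = z :=
  TwistedTensor.twMul_one ρ θ h4 (by simp [hθ.apply_one_right])
    (fun _ hh => hθ.sum_column_eq_zero hh) z

theorem twMul_tmul_eq (a b c d : B) : twMul ρ θ (a ⊗ₜ b) (c ⊗ₜ d) = (4 : K)⁻¹ •
    ((a * c) ⊗ₜ ((b + ρ g2 b + ρ g3 b + ρ g2 (ρ g3 b)) * d) +
      (a * ρ g2 c) ⊗ₜ ((b + ζ ^ 2 • ρ g2 b - ρ g3 b - ζ ^ 2 • ρ g2 (ρ g3 b)) * d) +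
      (a * ρ g3 c) ⊗ₜ ((b - ρ g2 b + ρ g3 b - ρ g2 (ρ g3 b)) * d) +
      (a * ρ g2 (ρ g3 c)) ⊗ₜ ((b - ζ ^ 2 • ρ g2 b - ρ g3 b + ζ ^ 2 • ρ g2 (ρ g3 b)) * d)) := by
  rw [TwistedTensor.twMul_tmul, sum_GG, sum_GG, sum_GG, sum_GG, sum_GG]
  simp only [hθ.apply_one_left, hθ.apply_one_right, hθ.mul_right, hθ.mul_left, hθ.g2_g2,
    hθ.g2_g3, hθ.g3_g2, hθ.g3_g3, map_one, map_mul, AlgHom.one_apply, AlgHom.mul_apply,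
    add_mul, sub_mul, smul_mul_assoc, tmul_add, tmul_sub, tmul_smul]
  match_scalars <;> ring

theorem twMul_tmul_of_inner_left_fixed (h2 : (2 : K) ≠ 0) (a b c d : B) (hb : ρ g3 b = b) :
    twMul ρ θ (a ⊗ₜ b) (c ⊗ₜ d) = (2 : K)⁻¹ •
      ((a * c) ⊗ₜ ((b + ρ g2 b) * d) + (a * ρ g3 c) ⊗ₜ ((b - ρ g2 b) * d)) := by
  have h4 : (4 : K) ≠ 0 := by rw [show (4 : K) = 2 * 2 by norm_num]; exact mul_ne_zero h2 h2
  rw [hθ.twMul_tmul_eq, hb]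
  simp only [add_mul, sub_mul, smul_mul_assoc, tmul_add, tmul_sub, tmul_smul]
  match_scalars <;> field_simp <;> ring

theorem twMul_tmul_of_inner_right_fixed (h2 : (2 : K) ≠ 0) (a b c d : B) (hc : ρ g3 c = c) :
    twMul ρ θ (a ⊗ₜ b) (c ⊗ₜ d) = (2 : K)⁻¹ •
      ((a * c) ⊗ₜ ((b + ρ g3 b) * d) + (a * ρ g2 c) ⊗ₜ ((b - ρ g3 b) * d)) := by
  have h4 : (4 : K) ≠ 0 := by rw [show (4 : K) = 2 * 2 by norm_num]; exact mul_ne_zero h2 h2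
  rw [hθ.twMul_tmul_eq, hc]
  simp only [add_mul, sub_mul, smul_mul_assoc, tmul_add, tmul_sub, tmul_smul]
  match_scalars <;> field_simp <;> ring

theorem twMul_tmul_of_inner_fixed (h2 : (2 : K) ≠ 0) (a b c d : B) (hb : ρ g3 b = b)
    (hc : ρ g3 c = c) : twMul ρ θ (a ⊗ₜ b) (c ⊗ₜ d) = (a * c) ⊗ₜ (b * d) := by
  rw [hθ.twMul_tmul_of_inner_left_fixed ρ h2 a b c d hb, hc, ← tmul_add, ← add_mul,
    add_add_sub_cancel, ← two_smul K b, smul_mul_assoc, tmul_smul, smul_smul,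
    inv_mul_cancel₀ h2, one_smul]

end IsSecondBichar

structure IsSecondAction {K : Type*} [Field K] {ζ : K}
    (ρ : GG →* (SecondAlg K ζ →ₐ[K] SecondAlg K ζ)) : Prop where
  g2_x : ρ g2 (xS K ζ) = xS K ζ ^ 3
  g2_y : ρ g2 (yS K ζ) = xS K ζ ^ 3 * yS K ζ
  g3_x : ρ g3 (xS K ζ) = xS K ζ
  g3_y : ρ g3 (yS K ζ) = xS K ζ ^ 2 * yS K ζ

namespace SecondAlg

open TwistedTensor

variable {K : Type*} [Field K] {ζ : K}

theorem xS_pow_four : xS K ζ ^ 4 = 1 := by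
  simpa [xS] using RingQuot.mkAlgHom_rel K (SecondRel.x_pow_four (K := K) (ζ := ζ))

theorem xS_mul_yS : xS K ζ * yS K ζ = yS K ζ * xS K ζ ^ 3 := by
  simpa [xS, yS] using RingQuot.mkAlgHom_rel K (SecondRel.x_mul_y (K := K) (ζ := ζ))

theorem yS_mul_yS : yS K ζ * yS K ζ =
    (2 : K)⁻¹ • (ζ • 1 + xS K ζ - ζ • xS K ζ ^ 2 + xS K ζ ^ 3) := by
  simpa [xS, yS, sq] using RingQuot.mkAlgHom_rel K (SecondRel.y_sq (K := K) (ζ := ζ))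

theorem xS_pow_add_four (n : ℕ) : xS K ζ ^ (n + 4) = xS K ζ ^ n := by
  rw [pow_add, xS_pow_four, mul_one]

theorem yS_mul_xS : yS K ζ * xS K ζ = xS K ζ ^ 3 * yS K ζ := by
  calc yS K ζ * xS K ζ = xS K ζ ^ 3 * (xS K ζ * yS K ζ) * xS K ζ := by
        rw [← mul_assoc, ← pow_succ, xS_pow_four, one_mul]
    _ = xS K ζ ^ 3 * yS K ζ := by
        rw [xS_mul_yS, mul_assoc, mul_assoc, ← pow_succ, xS_pow_four, mul_one]

theorem yS_mul_xS_pow (n : ℕ) : yS K ζ * xS K ζ ^ n = xS K ζ ^ (3 * n) * yS K ζ := by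
  induction n with
  | zero => simp
  | succ n ih =>
    rw [pow_succ, ← mul_assoc, ih, mul_assoc, yS_mul_xS, ← mul_assoc, ← pow_add, mul_add_one]

theorem yS_mul_xS_pow_mul (n : ℕ) (z : SecondAlg K ζ) :
    yS K ζ * (xS K ζ ^ n * z) = xS K ζ ^ (3 * n) * (yS K ζ * z) := by
  rw [← mul_assoc, yS_mul_xS_pow, mul_assoc]

section Lift

variable {S : Type*} [Ring S] [Algebra K S]

noncomputable def lift (u v : S) (hu : u ^ 4 = 1) (huv : u * v = v * u ^ 3)
    (hv : v ^ 2 = (2 : K)⁻¹ • (ζ • 1 + u - ζ • u ^ 2 + u ^ 3)) : SecondAlg K ζ →ₐ[K] S :=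
  RingQuot.liftAlgHom K ⟨FreeAlgebra.lift K ![u, v], by
    rintro _ _ ⟨⟩ <;> simp [hu, huv, hv]⟩

variable (u v : S) (hu : u ^ 4 = 1) (huv : u * v = v * u ^ 3)
    (hv : v ^ 2 = (2 : K)⁻¹ • (ζ • 1 + u - ζ • u ^ 2 + u ^ 3))

@[simp] theorem lift_xS : lift u v hu huv hv (xS K ζ) = u := by
  simp [lift, xS]

@[simp] theorem lift_yS : lift u v hu huv hv (yS K ζ) = v := by
  simp [lift, yS]

theorem hom_ext {f g : SecondAlg K ζ →ₐ[K] S} (hx : f (xS K ζ) = g (xS K ζ))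
    (hy : f (yS K ζ) = g (yS K ζ)) : f = g := by
  refine RingQuot.ringQuot_ext' _ _ _ (FreeAlgebra.hom_ext (funext fun i => ?_))
  fin_cases i
  exacts [hx, hy]

end Lift

section TwistedHom

variable {B : Type*} [Ring B] [Algebra K B] {G : Type*} [Fintype G] [Monoid G]
  (ρ : G →* (B →ₐ[K] B)) (θ : G → G → K)

theorem existsUnique_twMul_hom
    (hassoc : ∀ u v w, twMul ρ θ (twMul ρ θ u v) w = twMul ρ θ u (twMul ρ θ v w))
    (hone_mul : ∀ z : B ⊗[K] B, twMul ρ θ (1 ⊗ₜ 1) z = z)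
    (hmul_one : ∀ z : B ⊗[K] B, twMul ρ θ z (1 ⊗ₜ 1) = z) {u v : B ⊗[K] B}
    (hu : twMul ρ θ (twMul ρ θ (twMul ρ θ u u) u) u = 1 ⊗ₜ 1)
    (huv : twMul ρ θ u v = twMul ρ θ v (twMul ρ θ (twMul ρ θ u u) u))
    (hv : twMul ρ θ v v = (2 : K)⁻¹ •
      (ζ • (1 ⊗ₜ 1) + u - ζ • twMul ρ θ u u + twMul ρ θ (twMul ρ θ u u) u)) :
    ∃! Δ : SecondAlg K ζ →ₗ[K] B ⊗[K] B, Δ 1 = 1 ⊗ₜ 1 ∧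
      (∀ a b, Δ (a * b) = twMul ρ θ (Δ a) (Δ b)) ∧ Δ (xS K ζ) = u ∧ Δ (yS K ζ) = v := by
  let _ := TwistedTensor.ring ρ θ hassoc hone_mul hmul_one
  let _ := TwistedTensor.algebra ρ θ hassoc hone_mul hmul_one
  let u' : TwistedTensor K B := u
  let v' : TwistedTensor K B := v
  have hu' : u' ^ 4 = 1 := by
    simp only [pow_succ, pow_zero, one_mul]
    exact hu
  have huv' : u' * v' = v' * u' ^ 3 := by
    simp only [pow_succ, pow_zero, one_mul]
    exact huv
  have hv' : v' ^ 2 = (2 : K)⁻¹ • (ζ • 1 + u' - ζ • u' ^ 2 + u' ^ 3) := by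
    simp only [pow_succ, pow_zero, one_mul]
    exact hv
  let f := lift u' v' hu' huv' hv'
  have hf1 : f 1 = 1 := map_one f
  have hfmul : ∀ a b, f (a * b) = f a * f b := map_mul f
  have hfx : f (xS K ζ) = u' := lift_xS ..
  have hfy : f (yS K ζ) = v' := lift_yS ..
  refine ⟨f.toLinearMap, ⟨hf1, hfmul, hfx, hfy⟩, ?_⟩
  rintro Δ ⟨h1, hmul, hx, hy⟩
  let Δ' : SecondAlg K ζ →ₐ[K] TwistedTensor K B :=
    AlgHom.ofLinearMap (show SecondAlg K ζ →ₗ[K] TwistedTensor K B from Δ) h1 hmul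
  have := hom_ext (f := Δ') (g := f) (by simpa [Δ', f]) (by simpa [Δ', f])
  exact congrArg AlgHom.toLinearMap this

end TwistedHom

section Relations

/-- `x' = xPrime x`; also `x'³ = xPrime x³`. -/
noncomputable def xPrime (u : SecondAlg K ζ) : SecondAlg K ζ ⊗[K] SecondAlg K ζ :=
  (2 : K)⁻¹ • (u ⊗ₜ u + u ⊗ₜ (u ^ 3) + (u ^ 3) ⊗ₜ u - (u ^ 3) ⊗ₜ (u ^ 3))

variable {ρ : GG →* (SecondAlg K ζ →ₐ[K] SecondAlg K ζ)} (hρ : IsSecondAction ρ)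
  {θ : GG → GG → K} (hθ : IsSecondBichar ζ θ) (h2 : (2 : K) ≠ 0)
include hρ hθ h2

theorem twMul_xPrime_xPrime :
    twMul ρ θ (xPrime (xS K ζ)) (xPrime (xS K ζ)) = (xS K ζ ^ 2) ⊗ₜ (xS K ζ ^ 2) := by
  simp only [xPrime, twMul_add_left, twMul_add_right, twMul_sub_left, twMul_sub_right,
    twMul_smul_left, twMul_smul_right, hθ.twMul_tmul_of_inner_fixed ρ h2, map_pow, hρ.g3_x,
    ← pow_succ, ← pow_succ', ← sq, ← pow_mul, xS_pow_add_four, Nat.reduceAdd, Nat.reduceMul,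
    pow_zero]
  match_scalars <;> field_simp <;> ring

theorem twMul_sq_tmul_sq_xPrime :
    twMul ρ θ ((xS K ζ ^ 2) ⊗ₜ (xS K ζ ^ 2)) (xPrime (xS K ζ)) = xPrime (xS K ζ ^ 3) := by
  simp only [xPrime, twMul_add_right, twMul_sub_right, twMul_smul_right,
    hθ.twMul_tmul_of_inner_fixed ρ h2, map_pow, hρ.g3_x, ← pow_succ, ← pow_add, ← pow_mul,
    xS_pow_add_four, Nat.reduceAdd, Nat.reduceMul, pow_one]

theorem twMul_xPrime_cube_xPrime :
    twMul ρ θ (xPrime (xS K ζ ^ 3)) (xPrime (xS K ζ)) = 1 ⊗ₜ 1 := by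
  simp only [xPrime, twMul_add_left, twMul_add_right, twMul_sub_left, twMul_sub_right,
    twMul_smul_left, twMul_smul_right, hθ.twMul_tmul_of_inner_fixed ρ h2, map_pow, hρ.g3_x,
    ← pow_succ, ← pow_succ', ← sq, ← pow_mul, xS_pow_add_four, Nat.reduceAdd,
    Nat.reduceMul, Nat.reducePow, pow_zero, pow_one]
  match_scalars <;> field_simp <;> ring

theorem twMul_xPrime_yS_tmul_yS :
    twMul ρ θ (xPrime (xS K ζ)) ((yS K ζ) ⊗ₜ (yS K ζ)) =
      (xS K ζ * yS K ζ) ⊗ₜ (xS K ζ * yS K ζ) := by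
  simp only [xPrime, twMul_add_left, twMul_sub_left, twMul_smul_left,
    hθ.twMul_tmul_of_inner_left_fixed ρ h2, map_pow, hρ.g3_x, hρ.g2_x, hρ.g3_y, ← mul_assoc,
    ← pow_succ', ← pow_add, ← pow_mul, xS_pow_add_four, Nat.reduceAdd,
    Nat.reduceMul, pow_one, add_mul, sub_mul, tmul_add, tmul_sub]
  match_scalars <;> field_simp <;> ring

theorem twMul_yS_tmul_yS_xPrime_cube :
    twMul ρ θ ((yS K ζ) ⊗ₜ (yS K ζ)) (xPrime (xS K ζ ^ 3)) =
      (xS K ζ * yS K ζ) ⊗ₜ (xS K ζ * yS K ζ) := by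
  simp only [xPrime, twMul_add_right, twMul_sub_right, twMul_smul_right,
    hθ.twMul_tmul_of_inner_right_fixed ρ h2, map_pow, hρ.g3_x, hρ.g2_x, hρ.g3_y, ← pow_mul,
    add_mul, sub_mul, mul_assoc, yS_mul_xS_pow, tmul_add, tmul_sub]
  simp only [← mul_assoc, ← pow_succ, ← sq, ← pow_add, xS_pow_add_four,
    Nat.reduceAdd, Nat.reduceMul, Nat.reducePow, pow_one]
  match_scalars <;> field_simp <;> ring

theorem twMul_yS_tmul_yS_self (hζ : ζ ^ 4 = 1) :
    twMul ρ θ ((yS K ζ) ⊗ₜ (yS K ζ)) ((yS K ζ) ⊗ₜ (yS K ζ)) = (2 : K)⁻¹ •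
      (ζ • (1 ⊗ₜ 1) + xPrime (xS K ζ) - ζ • (xS K ζ ^ 2) ⊗ₜ (xS K ζ ^ 2) +
        xPrime (xS K ζ ^ 3)) := by
  have h4 : (4 : K) ≠ 0 := by rw [show (4 : K) = 2 * 2 by norm_num]; exact mul_ne_zero h2 h2
  rw [hθ.twMul_tmul_eq]
  simp only [xPrime, map_pow, map_mul, hρ.g2_x, hρ.g3_y, hρ.g2_y, ← pow_mul,
    add_mul, sub_mul, smul_mul_assoc, mul_assoc, yS_mul_xS_pow_mul, yS_mul_yS, mul_smul_comm,
    mul_add, mul_sub, mul_one]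
  simp only [← pow_succ, ← pow_succ', ← sq, ← pow_add, ← pow_mul, xS_pow_add_four,
    Nat.reduceAdd, Nat.reduceMul, Nat.reducePow, pow_zero, pow_one, mul_one]
  simp only [tmul_add, tmul_sub, add_tmul, sub_tmul, tmul_smul, ← smul_tmul']
  match_scalars <;> field_simp <;> grind

end Relations

end SecondAlg

open TwistedTensor SecondAlg in
theorem stmt_13 {K : Type*} [Field K] (ι : K) (hι : IsPrimitiveRoot ι 4)
    (ζ : K) (hζ : ζ ^ 4 = 1)
    (ρ : GG →* (SecondAlg K ζ →ₐ[K] SecondAlg K ζ))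
    (hρ2x : ρ g2 (xS K ζ) = xS K ζ ^ 3) (hρ2y : ρ g2 (yS K ζ) = xS K ζ ^ 3 * yS K ζ)
    (hρ3x : ρ g3 (xS K ζ) = xS K ζ) (hρ3y : ρ g3 (yS K ζ) = xS K ζ ^ 2 * yS K ζ)
    (θ : GG → GG → K)
    (hθr : ∀ g h h' : GG, θ g (h * h') = θ g h * θ g h')
    (hθl : ∀ g g' h : GG, θ (g * g') h = θ g h * θ g' h)
    (hθ22 : θ g2 g2 = ζ ^ 2) (hθ23 : θ g2 g3 = -1)
    (hθ32 : θ g3 g2 = -1) (hθ33 : θ g3 g3 = 1)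
    (x' y' : SecondAlg K ζ ⊗[K] SecondAlg K ζ)
    (hx' : x' = (2 : K)⁻¹ •
      ((xS K ζ) ⊗ₜ[K] (xS K ζ) + (xS K ζ) ⊗ₜ[K] (xS K ζ ^ 3) +
        (xS K ζ ^ 3) ⊗ₜ[K] (xS K ζ) - (xS K ζ ^ 3) ⊗ₜ[K] (xS K ζ ^ 3)))
    (hy' : y' = (yS K ζ) ⊗ₜ[K] (yS K ζ)) :
    -- `x'⁴ = 1 ⊗ 1`
    twMul ρ θ (twMul ρ θ (twMul ρ θ x' x') x') x' =
        (1 : SecondAlg K ζ) ⊗ₜ[K] (1 : SecondAlg K ζ) ∧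
    -- `x'y' = y'x'³`
    twMul ρ θ x' y' = twMul ρ θ y' (twMul ρ θ (twMul ρ θ x' x') x') ∧
    -- `y'² = (1/2)(ζ(1 ⊗ 1) + x' - ζx'² + x'³)`
    twMul ρ θ y' y' = (2 : K)⁻¹ •
      (ζ • ((1 : SecondAlg K ζ) ⊗ₜ[K] (1 : SecondAlg K ζ)) + x' - ζ • twMul ρ θ x' x'
        + twMul ρ θ (twMul ρ θ x' x') x') ∧
    -- there is a unique algebra homomorphism `Δ : A → A ⊗̂ A` with `Δ(x) = x'`, `Δ(y) = y'`
    (∃! Δ : SecondAlg K ζ →ₗ[K] SecondAlg K ζ ⊗[K] SecondAlg K ζ,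
      Δ 1 = (1 : SecondAlg K ζ) ⊗ₜ[K] (1 : SecondAlg K ζ) ∧
      (∀ a b : SecondAlg K ζ, Δ (a * b) = twMul ρ θ (Δ a) (Δ b)) ∧
      Δ (xS K ζ) = x' ∧ Δ (yS K ζ) = y') := by
  have h4 : (4 : K) ≠ 0 := by exact_mod_cast (hι.neZero' (R := K)).out
  have h2 : (2 : K) ≠ 0 := fun h => h4 (by rw [show (4 : K) = 2 * 2 by norm_num, h, zero_mul])
  have hθ : IsSecondBichar ζ θ := ⟨hθr, hθl, hθ22, hθ23, hθ32, hθ33⟩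
  have hρ : IsSecondAction ρ := ⟨hρ2x, hρ2y, hρ3x, hρ3y⟩
  have hx2 : twMul ρ θ x' x' = (xS K ζ ^ 2) ⊗ₜ (xS K ζ ^ 2) := by
    rw [hx']
    exact twMul_xPrime_xPrime hρ hθ h2
  have hx3 : twMul ρ θ (twMul ρ θ x' x') x' = xPrime (xS K ζ ^ 3) := by
    rw [hx2, hx']
    exact twMul_sq_tmul_sq_xPrime hρ hθ h2
  have hx4 : twMul ρ θ (twMul ρ θ (twMul ρ θ x' x') x') x' = 1 ⊗ₜ 1 := by
    rw [hx3, hx']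
    exact twMul_xPrime_cube_xPrime hρ hθ h2
  have hxy : twMul ρ θ x' y' = twMul ρ θ y' (twMul ρ θ (twMul ρ θ x' x') x') := by
    rw [hx3, hy', hx']
    exact (twMul_xPrime_yS_tmul_yS hρ hθ h2).trans (twMul_yS_tmul_yS_xPrime_cube hρ hθ h2).symm
  have hyy : twMul ρ θ y' y' = (2 : K)⁻¹ • (ζ • (1 ⊗ₜ 1) + x' - ζ • twMul ρ θ x' x' +
      twMul ρ θ (twMul ρ θ x' x') x') := by
    rw [hx3, hx2, hy', hx']
    exact twMul_yS_tmul_yS_self hρ hθ h2 hζ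
  exact ⟨hx4, hxy, hyy, existsUnique_twMul_hom ρ θ (twMul_assoc ρ θ hθl hθr)
    (hθ.one_twMul ρ h4) (hθ.twMul_one ρ h4) hx4 hxy hyy⟩
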